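/- For every prime p and positive integer n, B_{n+p^2} \equiv 2*B_n + B_{n+1} (mod p). -/

import Mathlib

/-!
Umbral proof. Let `φ` be the linear functional on polynomials with `φ (X ^ n) = B_n`. The Bell
recurrence `B_{n+1} = ∑ C(n, i) B_i` says `φ (X * f) = φ (f(X + 1))`, and iterating along the
falling factorial gives `φ (X(X-1)⋯(X-k+1) * f) = φ (f(X + k))`. Over `ZMod p` the falling
factorial of length `p` is `X ^ p - X` and `f(X + p) = f`, so `φ` kills the ideal generated by
`q = X ^ p - X - 1` (Touchard's congruence `B_{n+p} ≡ B_n + B_{n+1}`). By Frobenius,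
`X ^ (p ^ 2) - X - 2 = q ^ p + q` lies in that ideal.
-/

/-- Stirling numbers of the second kind. -/
def stirling : ℕ → ℕ → ℕ
  | 0, 0 => 1
  | 0, _ + 1 => 0
  | _ + 1, 0 => 0
  | n + 1, k + 1 => stirling n k + (k + 1) * stirling n (k + 1)

/-- The `n`-th Bell number. -/
def bell (n : ℕ) : ℕ := ∑ k ∈ Finset.range (n + 1), stirling n k

open Polynomial Finset

theorem stirling_eq_stirlingSecond : ∀ n k, stirling n k = Nat.stirlingSecond n k
  | 0, 0 | 0, _ + 1 | _ + 1, 0 => rfl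
  | n + 1, k + 1 => by
    rw [stirling, Nat.stirlingSecond_succ_succ, stirling_eq_stirlingSecond n k,
      stirling_eq_stirlingSecond n (k + 1), add_comm]

theorem bell_eq_sum_stirlingSecond {n m : ℕ} (h : n < m) :
    bell n = ∑ k ∈ range m, Nat.stirlingSecond n k := by
  simp_rw [bell, stirling_eq_stirlingSecond]
  refine sum_subset (range_subset_range.2 h) fun k _ hk => ?_
  exact Nat.stirlingSecond_eq_zero_of_lt (by simpa using hk)

theorem stirlingSecond_succ_succ_eq_sum_choose_mul (n k : ℕ) :
    Nat.stirlingSecond (n + 1) (k + 1) =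
      ∑ i ∈ range (n + 1), n.choose i * Nat.stirlingSecond i k := by
  induction n generalizing k with
  | zero => cases k <;> rfl
  | succ n ih =>
    have pascal := sum_choose_succ_mul (R := ℕ) (fun i _ => Nat.stirlingSecond i k) n
    simp only [Nat.cast_id] at pascal
    rw [pascal, ← ih]
    cases k with
    | zero => simp [Nat.stirlingSecond_succ_succ]
    | succ j =>
      simp only [Nat.stirlingSecond_succ_succ, mul_add, sum_add_distrib, mul_left_comm _ (j + 1),
        ← mul_sum, ← ih]
      ring

theorem bell_succ_eq_sum_choose_mul_bell (n : ℕ) :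
    bell (n + 1) = ∑ i ∈ range (n + 1), n.choose i * bell i := by
  calc bell (n + 1) = ∑ k ∈ range (n + 1), Nat.stirlingSecond (n + 1) (k + 1) := by
        rw [bell_eq_sum_stirlingSecond (Nat.lt_succ_self _), sum_range_succ']
        simp
    _ = ∑ i ∈ range (n + 1), n.choose i * ∑ k ∈ range (n + 1), Nat.stirlingSecond i k := by
        simp_rw [stirlingSecond_succ_succ_eq_sum_choose_mul, mul_sum]
        exact sum_comm
    _ = _ := sum_congr rfl fun i hi => by rw [bell_eq_sum_stirlingSecond (mem_range.1 hi)]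

section BellFunctional

variable (R : Type*) [CommRing R]

noncomputable def bellFunctional : R[X] →ₗ[R] R :=
  lsum fun n => (bell n : R) • LinearMap.id

variable {R}

theorem bellFunctional_monomial (n : ℕ) (a : R) :
    bellFunctional R (monomial n a) = a * bell n := by
  simp [bellFunctional, mul_comm]

theorem bellFunctional_X_pow (n : ℕ) : bellFunctional R (X ^ n) = bell n := by
  rw [X_pow_eq_monomial, bellFunctional_monomial, one_mul]

theorem bellFunctional_X_add_one_pow (n : ℕ) :
    bellFunctional R ((X + 1) ^ n) = bell (n + 1) := by
  simp only [bell_succ_eq_sum_choose_mul_bell, Nat.cast_sum, add_pow, one_pow, mul_one, map_sum]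
  refine sum_congr rfl fun i _ => ?_
  rw [← C_eq_natCast, mul_comm, C_mul', map_smul, bellFunctional_X_pow, smul_eq_mul]
  push_cast; ring

theorem bellFunctional_X_mul (f : R[X]) :
    bellFunctional R (X * f) = bellFunctional R (f.comp (X + 1)) := by
  induction f using Polynomial.induction_on' with
  | add f g hf hg => simp only [mul_add, add_comp, map_add, hf, hg]
  | monomial n a =>
    rw [X_mul_monomial, monomial_comp, C_mul', map_smul, bellFunctional_monomial,
      bellFunctional_X_add_one_pow, smul_eq_mul]

theorem bellFunctional_descPochhammer_mul (k : ℕ) (f : R[X]) :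
    bellFunctional R (descPochhammer R k * f) = bellFunctional R (f.comp (X + (k : R[X]))) := by
  induction k generalizing f with
  | zero => simp
  | succ k ih =>
    rw [descPochhammer_succ_left, mul_assoc, bellFunctional_X_mul, mul_comp, comp_assoc,
      sub_comp, X_comp, one_comp, add_sub_cancel_right, comp_X, ih, comp_assoc, add_comp, X_comp,
      one_comp, Nat.cast_succ, add_assoc]

end BellFunctional

theorem descPochhammer_zmod_eq_X_pow_sub_X (p : ℕ) [Fact p.Prime] :
    descPochhammer (ZMod p) p = X ^ p - X := by
  have hp : 1 < p := (Fact.out : p.Prime).one_lt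
  have hmonic : (X ^ p - X : (ZMod p)[X]).Monic :=
    monic_X_pow_sub (by rw [degree_X]; exact_mod_cast hp)
  have hdeg : (descPochhammer (ZMod p) p).degree = p := by
    rw [degree_eq_natDegree (monic_descPochhammer _ p).ne_zero, descPochhammer_natDegree]
  refine eq_of_degree_le_of_eval_finset_eq univ (by simp [hdeg]) ?_ ?_ fun a _ => ?_
  · rw [hdeg, degree_eq_natDegree hmonic.ne_zero, FiniteField.X_pow_card_sub_X_natDegree_eq _ hp]
  · rw [(monic_descPochhammer _ p).leadingCoeff, hmonic.leadingCoeff]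
  · rw [← ZMod.natCast_zmod_val a, descPochhammer_eval_coe_nat_of_lt (ZMod.val_lt a)]
    simp [ZMod.pow_card]

theorem bellFunctional_X_pow_sub_X_sub_one_mul (p : ℕ) [Fact p.Prime] (f : (ZMod p)[X]) :
    bellFunctional (ZMod p) ((X ^ p - X - 1) * f) = 0 := by
  have hshift := bellFunctional_descPochhammer_mul p f
  rw [descPochhammer_zmod_eq_X_pow_sub_X, CharP.cast_eq_zero, add_zero, comp_X] at hshift
  rw [sub_mul, one_mul, map_sub, hshift, sub_self]

theorem touchard_sq_general (p n : ℕ) (hp : p.Prime) :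
    bell (n + p ^ 2) ≡ 2 * bell n + bell (n + 1) [MOD p] := by
  have := Fact.mk hp
  set q : (ZMod p)[X] := X ^ p - X - 1
  have hfrob : q ^ p = X ^ p ^ 2 - X ^ p - 1 := by
    rw [sub_pow_char, sub_pow_char, one_pow, ← pow_mul, sq]
  have hfactor : X ^ (n + p ^ 2) - X ^ (n + 1) - 2 * X ^ n = q * ((q ^ (p - 1) + 1) * X ^ n) := by
    rw [← mul_assoc, mul_add, mul_pow_sub_one hp.ne_zero, hfrob]
    ring
  have hvanish := bellFunctional_X_pow_sub_X_sub_one_mul p ((q ^ (p - 1) + 1) * X ^ n)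
  rw [← hfactor, map_sub, map_sub, two_mul, map_add, bellFunctional_X_pow, bellFunctional_X_pow,
    bellFunctional_X_pow] at hvanish
  rw [← ZMod.natCast_eq_natCast_iff]
  push_cast
  linear_combination hvanish

theorem touchard_sq (p n : ℕ) (hp : p.Prime) (hn : 0 < n) :
    bell (n + p ^ 2) ≡ 2 * bell n + bell (n + 1) [MOD p] :=
  touchard_sq_general p n hp
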